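/- arXiv:math/0605448 — 5 statements merged into one kernel-verified Lean document; each statement's English description precedes it below -/
import Mathlib

section
/- If a set P ⊆ Baire space is the union of a countable family ⟨P^i : i ∈ ℕ⟩ of sets each of which admits a scale, then P admits a scale. -/
/-- Baire space: the functions from `ℕ` to `ℕ`. -/
abbrev Baire := ℕ → ℕ

/-- `φ` is a scale on `P ⊆ Baire`: whenever a sequence of elements of `P` converges
pointwise to `y` and each norm sequence is eventually constant with value `l n`,
then `y ∈ P` and `φ n y ≤ l n` for every `n`. -/
def IsScale (P : Set Baire) (φ : ℕ → Baire → Ordinal) : Prop :=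
  ∀ (x : ℕ → Baire) (y : Baire) (l : ℕ → Ordinal),
    (∀ i, x i ∈ P) →
    (∀ n, ∃ m, ∀ i, m ≤ i → x i n = y n) →
    (∀ n, ∃ m, ∀ i, m ≤ i → φ n (x i) = l n) →
    y ∈ P ∧ ∀ n, φ n y ≤ l n

/-!
Put `κ` above all the norms of all the pieces and let `k z` be the least `i` with `z ∈ P i`.
The norms `ψ n z = κ * k z + φ (k z) n z` code the pair `(k z, φ (k z) n z)` lexicographically,
and `k z` and `φ (k z) n z` are read back as the quotient and the remainder of `ψ n z` by `κ`.
So along a sequence with eventually constant `ψ`-norms the index `k` is eventually a constant `i₀`,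
the scale on `P i₀` applies to the tail, and the limit `y` lies in `P i₀`; then `k y ≤ i₀`, which
bounds `ψ n y` by the limit norms.
Since only the prewellorderings induced by norms matter, scales move freely between universes.
-/

universe u v w

open Filter Ordinal

theorem Ordinal.mul_add_lt_mul {κ α a b : Ordinal} (hα : α < κ) (hab : a < b) :
    κ * a + α < κ * b :=
  calc κ * a + α < κ * a + κ := by gcongr
    _ = κ * Order.succ a := (mul_succ κ a).symm
    _ ≤ κ * b := by gcongr; exact Order.succ_le_of_lt hab

theorem exists_ordinal_norm_le_iff {α : Type w} (f : α → Ordinal.{u}) :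
    ∃ g : α → Ordinal.{max w v}, ∀ a b, g a ≤ g b ↔ f a ≤ f b := by
  let r : α → α → Prop := InvImage (· < ·) f
  have : IsWellFounded α r := ⟨InvImage.wf f wellFounded_lt⟩
  have rank_mono : ∀ {a b}, f a ≤ f b → IsWellFounded.rank r a ≤ IsWellFounded.rank r b :=
    fun hab => by
      rw [IsWellFounded.rank_eq]
      exact Ordinal.iSup_le fun c =>
        Order.succ_le_of_lt (IsWellFounded.rank_lt_of_rel (c.2.trans_le hab))
  refine ⟨fun a => Ordinal.lift.{v} (IsWellFounded.rank r a), fun a b => ?_⟩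
  rw [Ordinal.lift_le]
  exact ⟨fun h => not_lt.1 fun hba => h.not_gt (IsWellFounded.rank_lt_of_rel hba), rank_mono⟩

namespace IsScale

variable {P : Set Baire} {φ : ℕ → Baire → Ordinal.{u}}

theorem iff_eventually : IsScale P φ ↔ ∀ (x : ℕ → Baire) (y : Baire) (l : ℕ → Ordinal),
    (∀ᶠ i in atTop, x i ∈ P) → (∀ n, ∀ᶠ i in atTop, x i n = y n) →
    (∀ n, ∀ᶠ i in atTop, φ n (x i) = l n) → y ∈ P ∧ ∀ n, φ n y ≤ l n := by
  refine ⟨fun hφ x y l hP hxy hl => ?_, fun hφ x y l hP hxy hl => ?_⟩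
  · obtain ⟨m, hm⟩ := eventually_atTop.1 hP
    have shift := tendsto_add_atTop_nat m
    refine hφ (fun i => x (i + m)) y l (fun i => hm _ (Nat.le_add_left m i))
      (fun n => eventually_atTop.1 (shift.eventually (hxy n)))
      (fun n => eventually_atTop.1 (shift.eventually (hl n)))
  · exact hφ x y l (.of_forall hP) (fun n => eventually_atTop.2 (hxy n))
      (fun n => eventually_atTop.2 (hl n))

theorem of_le_iff (hφ : IsScale P φ) {ψ : ℕ → Baire → Ordinal.{v}}
    (hψ : ∀ n a b, ψ n a ≤ ψ n b ↔ φ n a ≤ φ n b) : IsScale P ψ := by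
  refine iff_eventually.2 fun x y l hP hxy hl => ?_
  choose m hm using fun n => eventually_atTop.1 (hl n)
  have hφl : ∀ n, ∀ᶠ i in atTop, φ n (x i) = φ n (x (m n)) := fun n =>
    eventually_atTop.2 ⟨m n, fun i hi => by
      simpa only [le_antisymm_iff, hψ] using (hm n i hi).trans (hm n (m n) le_rfl).symm⟩
  obtain ⟨hyP, hy⟩ := iff_eventually.1 hφ x y _ hP hxy hφl
  exact ⟨hyP, fun n => hm n (m n) le_rfl ▸ (hψ n y _).2 (hy n)⟩

theorem exists_universe (hφ : IsScale P φ) : ∃ ψ : ℕ → Baire → Ordinal.{v}, IsScale P ψ := by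
  choose ψ hψ using fun n => exists_ordinal_norm_le_iff.{u, v, 0} (φ n)
  exact ⟨ψ, hφ.of_le_iff hψ⟩

end IsScale

section iUnion

variable (P : ℕ → Set Baire) (φ : ℕ → ℕ → Baire → Ordinal.{u}) (κ : Ordinal.{u})

/-- Junk value `0` when `z` lies in no `P i`. -/
noncomputable def firstIndex (z : Baire) : ℕ := sInf {i | z ∈ P i}

noncomputable def iUnionNorm (n : ℕ) (z : Baire) : Ordinal.{u} :=
  κ * firstIndex P z + φ (firstIndex P z) n z

variable {P φ κ}

theorem mem_firstIndex {z : Baire} (hz : z ∈ ⋃ i, P i) : z ∈ P (firstIndex P z) :=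
  Nat.sInf_mem (Set.mem_iUnion.1 hz)

theorem firstIndex_le {z : Baire} {i : ℕ} (hz : z ∈ P i) : firstIndex P z ≤ i :=
  Nat.sInf_le hz

variable (hκ : ∀ i n z, φ i n z < κ)
include hκ

theorem iUnionNorm_div (n : ℕ) (z : Baire) : iUnionNorm P φ κ n z / κ = firstIndex P z := by
  rw [iUnionNorm, mul_add_div _ (hκ 0 n z).ne_bot, div_eq_zero_of_lt (hκ _ n z), add_zero]

theorem iUnionNorm_mod (n : ℕ) (z : Baire) :
    iUnionNorm P φ κ n z % κ = φ (firstIndex P z) n z := by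
  rw [iUnionNorm, mul_add_mod_self, mod_eq_of_lt (hκ _ n z)]

theorem isScale_iUnionNorm (hφ : ∀ i, IsScale (P i) (φ i)) :
    IsScale (⋃ i, P i) (iUnionNorm P φ κ) := by
  refine IsScale.iff_eventually.2 fun x y l hP hxy hl => ?_
  have hk : ∀ n, ∀ᶠ j in atTop, firstIndex P (x j) = l n / κ := fun n =>
    (hl n).mono fun j hj => by rw [← hj, iUnionNorm_div hκ]
  obtain ⟨i₀, hi₀⟩ : ∃ i₀ : ℕ, (i₀ : Ordinal) = l 0 / κ := ⟨_, (hk 0).exists.choose_spec⟩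
  have hdiv : ∀ n, l n / κ = i₀ := fun n => by
    obtain ⟨j, hjn, hj0⟩ := ((hk n).and (hk 0)).exists
    rw [← hjn, hj0, hi₀]
  have hk₀ : ∀ᶠ j in atTop, firstIndex P (x j) = i₀ :=
    (hk 0).mono fun j hj => Nat.cast_inj.1 (hj.trans hi₀.symm)
  have hmem : ∀ᶠ j in atTop, x j ∈ P i₀ :=
    (hk₀.and hP).mono fun j ⟨hj, hjP⟩ => hj ▸ mem_firstIndex hjP
  have hφl : ∀ n, ∀ᶠ j in atTop, φ i₀ n (x j) = l n % κ := fun n =>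
    ((hl n).and hk₀).mono fun j ⟨hj, hj₀⟩ => by rw [← hj, iUnionNorm_mod hκ, hj₀]
  obtain ⟨hyP, hy⟩ := IsScale.iff_eventually.1 (hφ i₀) x y _ hmem hxy hφl
  refine ⟨Set.mem_iUnion.2 ⟨i₀, hyP⟩, fun n => ?_⟩
  have hln : κ * i₀ + l n % κ = l n := hdiv n ▸ div_add_mod (l n) κ
  rcases (firstIndex_le hyP).lt_or_eq with hlt | heq
  · calc iUnionNorm P φ κ n y ≤ κ * i₀ := (mul_add_lt_mul (hκ _ n y) (by exact_mod_cast hlt)).le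
      _ ≤ l n := hln ▸ le_self_add
  · calc iUnionNorm P φ κ n y = κ * i₀ + φ i₀ n y := by rw [iUnionNorm, heq]
      _ ≤ l n := hln ▸ by gcongr; exact hy n

end iUnion

/-- A countable union of sets admitting scales admits a scale. -/
theorem union_admits_scale (P : ℕ → Set Baire)
    (h : ∀ i, ∃ φ : ℕ → Baire → Ordinal, IsScale (P i) φ) :
    ∃ ψ : ℕ → Baire → Ordinal, IsScale (⋃ i, P i) ψ := by
  choose φ hφ using h
  have hκ : ∀ i n z, φ i n z < ⨆ p : ℕ × ℕ × Baire, φ p.1 p.2.1 p.2.2 + 1 :=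
    fun i n z => Ordinal.lt_iSup_add_one (fun p : ℕ × ℕ × Baire => φ p.1 p.2.1 p.2.2) (i, n, z)
  exact (isScale_iUnionNorm hκ hφ).exists_universe
end

section
/- Let Q ⊆ Baire space × Baire space, let ⟨φ̂_i : i ∈ ℕ⟩ be a scale on Q, let κ be an ordinal with φ̂_i(x,w) < κ for all i ∈ ℕ and all (x,w) ∈ Q, and let P = {x : there exists w with (x,w) ∈ Q}. For each i ∈ ℕ fix an order-embedding c_i of the (i+1)-tuples of pairs from κ × ℕ, ordered lexicographically (comparing in turn the first ordinal entry, the first natural-number entry, the second ordinal entry, the second natural-number entry, and so on), into the ordinals. Define norms on P by φ_0(x) = 0 and φ_{i+1}(x) = the minimum, over all w with (x,w) ∈ Q, of c_i(⟨(φ̂_0(x,w), w(0)), (φ̂_1(x,w), w(1)), …, (φ̂_i(x,w), w(i))⟩). Then ⟨φ_i : i ∈ ℕ⟩ is a scale on P. (This is the 'inf' step, Case 1 of the paper's Moschovakis scale construction, propagating scales through the existential real quantifier.) -/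
/-- `φ` is a scale on `Q ⊆ Baire × Baire`, where convergence of pairs is
coordinatewise pointwise convergence. -/
def IsScale₂ (Q : Set (Baire × Baire)) (φ : ℕ → Baire × Baire → Ordinal) : Prop :=
  ∀ (p : ℕ → Baire × Baire) (q : Baire × Baire) (l : ℕ → Ordinal),
    (∀ i, p i ∈ Q) →
    (∀ n, ∃ m, ∀ i, m ≤ i → (p i).1 n = q.1 n) →
    (∀ n, ∃ m, ∀ i, m ≤ i → (p i).2 n = q.2 n) →
    (∀ n, ∃ m, ∀ i, m ≤ i → φ n (p i) = l n) →
    q ∈ Q ∧ ∀ n, φ n q ≤ l n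

/-- The lexicographic strict order on `n`-tuples of pairs `(ordinal, natural number)`:
compare in turn the first ordinal entry, the first natural-number entry, the second
ordinal entry, and so on. -/
def TupLex {n : ℕ} (f g : Fin n → Ordinal × ℕ) : Prop :=
  ∃ j, (∀ i, i < j → f i = g i) ∧
    ((f j).1 < (g j).1 ∨ ((f j).1 = (g j).1 ∧ (f j).2 < (g j).2))

open Filter

namespace TupLex

variable {n : ℕ} {f g : Fin n → Ordinal × ℕ}

theorem iff_toLex_lt :
    TupLex f g ↔ toLex (fun j => toLex (f j)) < toLex (fun j => toLex (g j)) :=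
  exists_congr fun _ => and_congr (forall₂_congr fun _ _ => toLex.injective.eq_iff.symm)
    Prod.Lex.toLex_lt_toLex.symm

theorem trichotomous (f g : Fin n → Ordinal × ℕ) : f = g ∨ TupLex f g ∨ TupLex g f := by
  simp only [iff_toLex_lt]
  rcases lt_trichotomy (toLex fun j => toLex (f j)) (toLex fun j => toLex (g j)) with h | h | h
  · exact Or.inr (Or.inl h)
  · exact Or.inl (funext fun j => toLex.injective (congrFun (toLex.injective h) j))
  · exact Or.inr (Or.inr h)

theorem not_of_le (h : f ≤ g) : ¬TupLex g f := by
  rintro ⟨j, -, hlt | ⟨-, hlt⟩⟩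
  · exact (h j).1.not_gt hlt
  · exact (h j).2.not_gt hlt

theorem of_comp_castLE {m : ℕ} (hmn : m ≤ n)
    (h : TupLex (f ∘ Fin.castLE hmn) (g ∘ Fin.castLE hmn)) : TupLex f g := by
  obtain ⟨j, hpre, hj⟩ := h
  refine ⟨Fin.castLE hmn j, fun i hi => ?_, hj⟩
  exact hpre ⟨i, (Fin.lt_def.1 hi).trans j.isLt⟩ hi

end TupLex

def IsLexEmbedding {n : ℕ} (κ : Ordinal) (c : (Fin n → Ordinal × ℕ) → Ordinal) : Prop :=
  ∀ f g : Fin n → Ordinal × ℕ, (∀ j, (f j).1 < κ) → (∀ j, (g j).1 < κ) →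
    (TupLex f g ↔ c f < c g)

namespace IsLexEmbedding

variable {n : ℕ} {κ : Ordinal} {c : (Fin n → Ordinal × ℕ) → Ordinal} {f g : Fin n → Ordinal × ℕ}

theorem eq_of_apply_eq (hc : IsLexEmbedding κ c) (hf : ∀ j, (f j).1 < κ) (hg : ∀ j, (g j).1 < κ)
    (h : c f = c g) : f = g := by
  rcases TupLex.trichotomous f g with heq | hlt | hgt
  · exact heq
  · exact absurd h ((hc f g hf hg).1 hlt).ne
  · exact absurd h ((hc g f hg hf).1 hgt).ne'

theorem apply_le_apply (hc : IsLexEmbedding κ c) (hf : ∀ j, (f j).1 < κ) (hg : ∀ j, (g j).1 < κ)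
    (h : f ≤ g) : c f ≤ c g :=
  not_lt.1 fun hlt => TupLex.not_of_le h ((hc g f hg hf).2 hlt)

theorem exists_eventually_eq {ι : Type*} {l : Filter ι} [l.NeBot] (hc : IsLexEmbedding κ c)
    {F : ι → Fin n → Ordinal × ℕ} (hF : ∀ i j, (F i j).1 < κ) {o : Ordinal}
    (h : ∀ᶠ i in l, c (F i) = o) : ∃ t, ∀ᶠ i in l, F i = t := by
  obtain ⟨i₀, hi₀⟩ := h.exists
  exact ⟨F i₀, h.mono fun i hi => hc.eq_of_apply_eq (hF i) (hF i₀) (hi.trans hi₀.symm)⟩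

end IsLexEmbedding

def normTuple (φhat : ℕ → Baire × Baire → Ordinal) (p : Baire × Baire) (n : ℕ) :
    Fin n → Ordinal × ℕ :=
  fun j => (φhat j p, p.2 j)

def normSet (Q : Set (Baire × Baire)) (φhat : ℕ → Baire × Baire → Ordinal)
    (c : ∀ i : ℕ, (Fin (i + 1) → Ordinal × ℕ) → Ordinal) (n : ℕ) (x : Baire) : Set Ordinal :=
  {o | ∃ w, (x, w) ∈ Q ∧ o = c n (normTuple φhat (x, w) (n + 1))}

section

variable {Q : Set (Baire × Baire)} {φhat : ℕ → Baire × Baire → Ordinal} {κ : Ordinal}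
  {c : ∀ i : ℕ, (Fin (i + 1) → Ordinal × ℕ) → Ordinal}

theorem fst_normTuple_lt (hbound : ∀ i p, p ∈ Q → φhat i p < κ) {p : Baire × Baire}
    (hp : p ∈ Q) {n : ℕ} (j : Fin n) : (normTuple φhat p n j).1 < κ :=
  hbound j p hp

theorem exists_isLeast_normSet (n : ℕ) {x : Baire} (hx : ∃ w, (x, w) ∈ Q) :
    ∃ w, (x, w) ∈ Q ∧ IsLeast (normSet Q φhat c n x) (c n (normTuple φhat (x, w) (n + 1))) := by
  obtain ⟨w, hw⟩ := hx
  obtain ⟨w₀, hw₀, heq⟩ := csInf_mem (s := normSet Q φhat c n x) ⟨_, w, hw, rfl⟩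
  exact ⟨w₀, hw₀, heq ▸ isLeast_csInf ⟨_, w, hw, rfl⟩⟩

theorem isLeast_normSet_of_le (hbound : ∀ i p, p ∈ Q → φhat i p < κ)
    (hc : ∀ i, IsLexEmbedding κ (c i)) {x w : Baire} (hw : (x, w) ∈ Q) {n i : ℕ}
    (h : IsLeast (normSet Q φhat c i x) (c i (normTuple φhat (x, w) (i + 1)))) (hni : n ≤ i) :
    IsLeast (normSet Q φhat c n x) (c n (normTuple φhat (x, w) (n + 1))) := by
  refine ⟨⟨w, hw, rfl⟩, ?_⟩
  rintro _ ⟨w', hw', rfl⟩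
  refine not_lt.1 fun hlt => (h.2 ⟨w', hw', rfl⟩).not_gt ?_
  have hprefix := (hc n _ _ (fst_normTuple_lt hbound hw') (fst_normTuple_lt hbound hw)).2 hlt
  exact (hc i _ _ (fst_normTuple_lt hbound hw') (fst_normTuple_lt hbound hw)).1
    (TupLex.of_comp_castLE (Nat.succ_le_succ hni) hprefix)

theorem IsScale₂.exists_normTuple_le (hQ : IsScale₂ Q φhat) {p : ℕ → Baire × Baire} {y : Baire}
    {t : ∀ n : ℕ, Fin (n + 1) → Ordinal × ℕ} (hpQ : ∀ i, p i ∈ Q)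
    (hconv : ∀ n, ∃ m, ∀ i, m ≤ i → (p i).1 n = y n)
    (ht : ∀ n, ∀ᶠ i in atTop, normTuple φhat (p i) (n + 1) = t n) :
    ∃ w, (y, w) ∈ Q ∧ ∀ n, normTuple φhat (y, w) (n + 1) ≤ t n := by
  set w : Baire := fun n => (t n (Fin.last n)).2
  set lam : ℕ → Ordinal := fun n => (t n (Fin.last n)).1
  have hlast : ∀ n, ∀ᶠ i in atTop, φhat n (p i) = lam n ∧ (p i).2 n = w n := fun n =>
    (ht n).mono fun i hi => Prod.ext_iff.1 (congrFun hi (Fin.last n))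
  obtain ⟨hyQ, hle⟩ := hQ p (y, w) lam hpQ hconv
    (fun n => eventually_atTop.1 ((hlast n).mono fun _ => And.right))
    (fun n => eventually_atTop.1 ((hlast n).mono fun _ => And.left))
  refine ⟨w, hyQ, fun n j => ?_⟩
  have hcoord : t n j = (lam j, w j) := by
    obtain ⟨i, hin, hij⟩ := ((ht n).and (ht j)).exists
    simp only [lam, w, ← hin, ← hij]
    rfl
  rw [hcoord]
  exact ⟨hle j, le_rfl⟩

end

/-- The "inf" step (Case 1) of the Moschovakis scale construction: given a scale `φhat`
on `Q ⊆ Baire × Baire` bounded by `κ`, order-embeddings `c i` of the lexicographically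
ordered `(i+1)`-tuples of pairs from `κ × ℕ` into the ordinals, and norms on the
projection `P` defined by `φ 0 x = 0` and
`φ (i+1) x = min_{w, (x,w) ∈ Q} c i ⟨(φhat 0 (x,w), w 0), …, (φhat i (x,w), w i)⟩`,
the sequence `φ` is a scale on `P`. -/
theorem moschovakis_inf_step
    (Q : Set (Baire × Baire)) (φhat : ℕ → Baire × Baire → Ordinal) (κ : Ordinal)
    (hQ : IsScale₂ Q φhat)
    (hbound : ∀ i p, p ∈ Q → φhat i p < κ)
    (P : Set Baire) (hP : ∀ x, x ∈ P ↔ ∃ w, (x, w) ∈ Q)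
    (c : ∀ i : ℕ, (Fin (i + 1) → Ordinal × ℕ) → Ordinal)
    (hc : ∀ (i : ℕ) (f g : Fin (i + 1) → Ordinal × ℕ),
      (∀ j, (f j).1 < κ) → (∀ j, (g j).1 < κ) →
      (TupLex f g ↔ c i f < c i g))
    (φ : ℕ → Baire → Ordinal)
    (hφ0 : ∀ x ∈ P, φ 0 x = 0)
    (hφs : ∀ i, ∀ x ∈ P, φ (i + 1) x =
      sInf {o : Ordinal | ∃ w, (x, w) ∈ Q ∧
        o = c i fun j : Fin (i + 1) => (φhat (j : ℕ) (x, w), w (j : ℕ))}) :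
    IsScale P φ := by
  have hlex : ∀ i, IsLexEmbedding κ (c i) := hc
  intro x y l hxP hconv hnorm
  choose W hWQ hWmin using fun i =>
    exists_isLeast_normSet (c := c) (φhat := φhat) i ((hP (x i)).1 (hxP i))
  have hc_eventually :
      ∀ n, ∀ᶠ i in atTop, c n (normTuple φhat (x i, W i) (n + 1)) = l (n + 1) := by
    intro n
    filter_upwards [eventually_atTop.2 (hnorm (n + 1)), eventually_ge_atTop n] with i hi hni
    rw [← hi, hφs n _ (hxP i)]
    exact (isLeast_normSet_of_le hbound hlex (hWQ i) (hWmin i) hni).csInf_eq.symm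
  choose t ht using fun n =>
    (hlex n).exists_eventually_eq (fun i => fst_normTuple_lt hbound (hWQ i)) (hc_eventually n)
  obtain ⟨w, hyQ, hle⟩ := hQ.exists_normTuple_le hWQ hconv ht
  have hyP : y ∈ P := (hP y).2 ⟨w, hyQ⟩
  refine ⟨hyP, fun n => ?_⟩
  cases n with
  | zero => exact (hφ0 y hyP).trans_le zero_le
  | succ n =>
    obtain ⟨i, hti, hci⟩ := ((ht n).and (hc_eventually n)).exists
    calc φ (n + 1) y ≤ c n (normTuple φhat (y, w) (n + 1)) :=
          (hφs n y hyP).trans_le (csInf_le' ⟨w, hyQ, rfl⟩)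
      _ ≤ c n (normTuple φhat (x i, W i) (n + 1)) :=
          (hlex n).apply_le_apply (fst_normTuple_lt hbound hyQ)
            (fst_normTuple_lt hbound (hWQ i)) (hti ▸ hle n)
      _ = l (n + 1) := hci
end

section
/- If Q ⊆ Baire space × Baire space admits a scale, then its projection P = {x : there exists w with (x,w) ∈ Q} admits a scale. -/
open Filter

namespace Ordinal

theorem mul_add_lt_mul_add {Λ a b c d : Ordinal} (hac : a < c) (hb : b < Λ) :
    Λ * a + b < Λ * c + d :=
  calc Λ * a + b < Λ * a + Λ := add_lt_add_right hb _
    _ = Λ * (a + 1) := (mul_add_one Λ a).symm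
    _ ≤ Λ * c := mul_le_mul_right (Order.add_one_le_of_lt hac) Λ
    _ ≤ Λ * c + d := le_self_add

theorem mul_add_inj_of_lt {Λ a b c d : Ordinal} (hb : b < Λ) (hd : d < Λ)
    (h : Λ * a + b = Λ * c + d) : a = c ∧ b = d := by
  have hΛ : Λ ≠ 0 := (zero_le.trans_lt hb).ne'
  refine ⟨?_, ?_⟩
  · simpa [mul_add_div _ hΛ, div_eq_zero_of_lt hb, div_eq_zero_of_lt hd] using congrArg (· / Λ) h
  · simpa [mul_add_mod_self, mod_eq_of_lt hb, mod_eq_of_lt hd] using congrArg (· % Λ) h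

/-- The rank of `a` in the well-founded relation `f · < f ·` lives in the universe of `α`,
so it can be lifted to any universe. -/
theorem exists_le_iff_le {α : Type w} (f : α → Ordinal.{u}) :
    ∃ g : α → Ordinal.{max w v}, ∀ a b, g a ≤ g b ↔ f a ≤ f b := by
  let r : α → α → Prop := fun a b => f a < f b
  have : IsWellFounded α r := ⟨InvImage.wf f wellFounded_lt⟩
  have rank_lt {a b} (h : f a < f b) : IsWellFounded.rank r a < IsWellFounded.rank r b :=
    IsWellFounded.rank_lt_of_rel h
  have rank_le {a b} (h : f a ≤ f b) : IsWellFounded.rank r a ≤ IsWellFounded.rank r b := by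
    rw [IsWellFounded.rank_eq]
    exact Ordinal.iSup_le fun c => Order.succ_le_of_lt (rank_lt (c.2.trans_le h))
  refine ⟨fun a => Ordinal.lift.{v} (IsWellFounded.rank r a), fun a b => ?_⟩
  rw [Ordinal.lift_le]
  exact ⟨fun h => not_lt.1 fun hba => (rank_lt hba).not_ge h, rank_le⟩

end Ordinal

theorem IsScale.of_le_iff_s4 {P : Set Baire} {φ : ℕ → Baire → Ordinal.{u}}
    {ψ : ℕ → Baire → Ordinal.{v}} (hφ : IsScale P φ)
    (hψ : ∀ n a b, ψ n a ≤ ψ n b ↔ φ n a ≤ φ n b) : IsScale P ψ := by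
  have hψ_eq (n a b) : ψ n a = ψ n b ↔ φ n a = φ n b := by
    simp only [le_antisymm_iff, hψ]
  intro x y l hxP hxy hl
  choose m hm using hl
  have hφ_const (n i) (hi : m n ≤ i) : φ n (x i) = φ n (x (m n)) :=
    (hψ_eq n _ _).1 ((hm n i hi).trans (hm n (m n) le_rfl).symm)
  obtain ⟨hyP, hle⟩ := hφ x y (fun n => φ n (x (m n))) hxP hxy fun n => ⟨m n, hφ_const n⟩
  exact ⟨hyP, fun n => hm n (m n) le_rfl ▸ (hψ n y (x (m n))).2 (hle n)⟩

/-- Base-`Λ` numeral whose digits, most significant first, are `f 0 a, …, f (n - 1) a`. -/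
noncomputable def lexCode {α : Type*} (Λ : Ordinal) (f : ℕ → α → Ordinal) : ℕ → α → Ordinal
  | 0, _ => 0
  | n + 1, a => Λ * lexCode Λ f n a + f n a

section lexCode

variable {α : Type*} {Λ : Ordinal} {f : ℕ → α → Ordinal} {m n : ℕ} {a b : α}

theorem lexCode_lt_lexCode (hf : ∀ n a, f n a < Λ) (hmn : m ≤ n)
    (h : lexCode Λ f m a < lexCode Λ f m b) : lexCode Λ f n a < lexCode Λ f n b := by
  induction n, hmn using Nat.le_induction with
  | base => exact h
  | succ n _ ih => exact Ordinal.mul_add_lt_mul_add ih (hf n a)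

theorem lexCode_le_lexCode (h : ∀ k < n, f k a ≤ f k b) : lexCode Λ f n a ≤ lexCode Λ f n b := by
  induction n with
  | zero => exact le_rfl
  | succ n ih =>
    exact add_le_add (mul_le_mul_right (ih fun k hk => h k (hk.trans n.lt_add_one)) Λ)
      (h n n.lt_add_one)

theorem lexCode_succ_inj (hf : ∀ n a, f n a < Λ)
    (h : lexCode Λ f (n + 1) a = lexCode Λ f (n + 1) b) : f n a = f n b :=
  (Ordinal.mul_add_inj_of_lt (hf n a) (hf n b) h).2

end lexCode

noncomputable def projNorm (Q : Set (Baire × Baire)) (c : ℕ → Baire × Baire → Ordinal)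
    (n : ℕ) (x : Baire) : Ordinal :=
  ⨅ w : {w // (x, w) ∈ Q}, c n (x, w.1)

section projection

variable {Q : Set (Baire × Baire)} {φ : ℕ → Baire × Baire → Ordinal}
  {c : ℕ → Baire × Baire → Ordinal}

theorem projNorm_le {n : ℕ} {x w : Baire} (hw : (x, w) ∈ Q) : projNorm Q c n x ≤ c n (x, w) :=
  ciInf_le' (fun w' : {w' // (x, w') ∈ Q} => c n (x, w'.1)) ⟨w, hw⟩

/-- A witness minimising the `i`-th code also minimises every earlier code. -/
theorem exists_mem_forall_le_eq_projNorm
    (hc_lt : ∀ ⦃m n q q'⦄, m ≤ n → c m q < c m q' → c n q < c n q')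
    {x : Baire} (hx : ∃ w, (x, w) ∈ Q) (i : ℕ) :
    ∃ w, (x, w) ∈ Q ∧ ∀ n ≤ i, c n (x, w) = projNorm Q c n x := by
  have : Nonempty {w // (x, w) ∈ Q} := hx.elim fun w hw => ⟨⟨w, hw⟩⟩
  obtain ⟨⟨w, hw⟩, hmin⟩ := ciInf_mem fun w' : {w' // (x, w') ∈ Q} => c i (x, w'.1)
  refine ⟨w, hw, fun n hn => le_antisymm (le_ciInf fun w' => not_lt.1 fun hlt => ?_)
    (projNorm_le hw)⟩
  exact (hc_lt hn hlt).not_ge (hmin.trans_le (projNorm_le w'.2))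

/-- The hypotheses say that `c n` codes `φ 0, w 0, …, φ n, w n` lexicographically. -/
theorem IsScale₂.isScale_projNorm (hφ : IsScale₂ Q φ)
    (hc_lt : ∀ ⦃m n q q'⦄, m ≤ n → c m q < c m q' → c n q < c n q')
    (hc_eq : ∀ ⦃n q q'⦄, c n q = c n q' → φ n q = φ n q' ∧ q.2 n = q'.2 n)
    (hc_le : ∀ ⦃n q q'⦄, (∀ k ≤ n, φ k q ≤ φ k q' ∧ q.2 k = q'.2 k) → c n q ≤ c n q') :
    IsScale {x | ∃ w, (x, w) ∈ Q} (projNorm Q c) := by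
  intro x y l hxP hxy hl
  choose w hwQ hw using fun i => exists_mem_forall_le_eq_projNorm hc_lt (hxP i) i
  have hcode (n) : ∀ᶠ i in atTop, c n (x i, w i) = l n := by
    filter_upwards [eventually_atTop.2 (hl n), eventually_ge_atTop n] with i hi hni
    rw [hw i n hni, hi]
  choose N hN using fun n => (hcode n).exists
  have hstable (n) : ∀ᶠ i in atTop,
      φ n (x i, w i) = φ n (x (N n), w (N n)) ∧ w i n = w (N n) n :=
    (hcode n).mono fun i hi => hc_eq (hi.trans (hN n).symm)
  set v : Baire := fun n => w (N n) n
  obtain ⟨hyQ, hle⟩ := hφ (fun i => (x i, w i)) (y, v) (fun n => φ n (x (N n), w (N n)))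
    hwQ hxy (fun n => eventually_atTop.1 ((hstable n).mono fun _ h => h.2))
    (fun n => eventually_atTop.1 ((hstable n).mono fun _ h => h.1))
  refine ⟨⟨v, hyQ⟩, fun n => ?_⟩
  obtain ⟨I, hI, hIn⟩ :=
    (((eventually_all_finite (Set.finite_le_nat n)).2 fun k _ => hstable k).and (hcode n)).exists
  calc projNorm Q c n y ≤ c n (y, v) := projNorm_le hyQ
    _ ≤ c n (x I, w I) := hc_le fun k hk => ⟨(hle k).trans (hI k hk).1.ge, (hI k hk).2.symm⟩
    _ = l n := hIn

end projection

/-- The code of `(x, w)` at level `n` is the base-`Λ` numeral with digits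
`ω * φ k (x, w) + w k` for `k ≤ n`, where `Λ` bounds all these digits. -/
theorem IsScale₂.exists_isScale_projection {Q : Set (Baire × Baire)}
    {φ : ℕ → Baire × Baire → Ordinal.{u}} (hφ : IsScale₂ Q φ) :
    ∃ ψ : ℕ → Baire → Ordinal.{u}, IsScale {x | ∃ w, (x, w) ∈ Q} ψ := by
  let digit : ℕ → Baire × Baire → Ordinal.{u} := fun n q => Ordinal.omega0 * φ n q + q.2 n
  obtain ⟨M, hM⟩ := Ordinal.bddAbove_of_small (s := Set.range fun p : ℕ × _ => digit p.1 p.2)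
  have hdigit_lt (n q) : digit n q < Order.succ M := Order.lt_succ_of_le (hM ⟨(n, q), rfl⟩)
  refine ⟨projNorm Q fun n => lexCode (Order.succ M) digit (n + 1), hφ.isScale_projNorm
    (fun m n q q' hmn h => lexCode_lt_lexCode hdigit_lt (Nat.succ_le_succ hmn) h)
    (fun n q q' h => ?_) (fun n q q' h => lexCode_le_lexCode fun k hk => ?_)⟩
  · obtain ⟨hφ_eq, hw_eq⟩ := Ordinal.mul_add_inj_of_lt (Ordinal.natCast_lt_omega0 _)
      (Ordinal.natCast_lt_omega0 _) (lexCode_succ_inj hdigit_lt h)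
    exact ⟨hφ_eq, Nat.cast_injective hw_eq⟩
  · obtain ⟨hφ_le, hw_eq⟩ := h k (Nat.lt_succ_iff.1 hk)
    exact add_le_add (mul_le_mul_right hφ_le _) (by rw [hw_eq])

/-- If `Q ⊆ Baire × Baire` admits a scale, then its projection
`P = {x : ∃ w, (x,w) ∈ Q}` admits a scale. -/
theorem projection_admits_scale (Q : Set (Baire × Baire))
    (h : ∃ φ : ℕ → Baire × Baire → Ordinal, IsScale₂ Q φ) :
    ∃ ψ : ℕ → Baire → Ordinal, IsScale {x : Baire | ∃ w, (x, w) ∈ Q} ψ := by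
  obtain ⟨φ, hφ⟩ := h
  obtain ⟨ψ, hψ⟩ := hφ.exists_isScale_projection
  choose ψ' hψ' using fun n => Ordinal.exists_le_iff_le (ψ n)
  exact ⟨ψ', hψ.of_le_iff_s4 hψ'⟩
end

section
/- Let κ and μ be ordinals, let Q ⊆ Baire space × κ, and let ⟨φ_i : i ∈ ℕ⟩ be a scale on Q with φ_i(x,α) < μ for all i ∈ ℕ and all (x,α) ∈ Q. Let P = {x : there exists α < κ with (x,α) ∈ Q}, and for x ∈ P let α_x denote the least α < κ with (x,α) ∈ Q. Define norms on P by ψ_0(x) = 0 and ψ_{i+1}(x) = μ · α_x + φ_i(x, α_x) (ordinal arithmetic; this is the ordinal assigned to the pair ⟨α_x, φ_i(x,α_x)⟩ under the lexicographic order on pairs). Then ⟨ψ_i : i ∈ ℕ⟩ is a scale on P. (This is the 'min' step, Case 2 of the paper's Moschovakis scale construction, with the well-founded rank of the extra quantifier's domain represented by an ordinal.) -/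
/-- `φ` is a scale on `Q ⊆ Baire × Ordinal`, the ordinal coordinate carrying the
discrete topology (so a sequence of ordinals converges iff it is eventually constant). -/
def IsScaleOrd (Q : Set (Baire × Ordinal)) (φ : ℕ → Baire × Ordinal → Ordinal) : Prop :=
  ∀ (x : ℕ → Baire) (a : ℕ → Ordinal) (y : Baire) (α : Ordinal) (l : ℕ → Ordinal),
    (∀ i, (x i, a i) ∈ Q) →
    (∀ n, ∃ m, ∀ i, m ≤ i → x i n = y n) →
    (∃ m, ∀ i, m ≤ i → a i = α) →
    (∀ n, ∃ m, ∀ i, m ≤ i → φ n (x i, a i) = l n) →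
    (y, α) ∈ Q ∧ ∀ n, φ n (y, α) ≤ l n

/-!
Since `φ i < μ`, the ordinal `μ · α + φ i (x, α)` encodes the pair `⟨α, φ i (x, α)⟩`: division
by `μ` recovers `α` and the remainder recovers `φ i (x, α)`. So if every `ψ (i + 1) (x_k)` is
eventually constant, the minimal witnesses `A x_k` are eventually equal to some `α`, and each
`φ i (x_k, α)` is eventually constant. The scale property of `φ` then puts `(y, α)` in `Q`, so
`y ∈ P` with `A y ≤ α`, and the lexicographic order on pairs gives the norm bounds.
-/

open Filter

namespace Ordinal

variable {μ α β a b : Ordinal}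

theorem mul_add_div_of_lt (α : Ordinal) (ha : a < μ) : (μ * α + a) / μ = α := by
  rw [mul_add_div α ha.ne_bot a, div_eq_zero_of_lt ha, add_zero]

theorem mul_add_mod_of_lt (α : Ordinal) (ha : a < μ) : (μ * α + a) % μ = a := by
  rw [mul_add_mod_self, mod_eq_of_lt ha]

theorem mul_add_lt_mul_add_of_lt (ha : a < μ) (h : α < β) (b : Ordinal) :
    μ * α + a < μ * β + b :=
  calc μ * α + a < μ * α + μ := add_lt_add_right ha _
    _ = μ * (α + 1) := (mul_add_one μ α).symm
    _ ≤ μ * β := mul_le_mul_right (Order.add_one_le_of_lt h) μ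
    _ ≤ μ * β + b := le_self_add

theorem mul_add_le_mul_add_of_lex (hα : α ≤ β) (ha : a < μ) (hab : α = β → a ≤ b) :
    μ * α + a ≤ μ * β + b := by
  rcases hα.lt_or_eq with hlt | rfl
  · exact (mul_add_lt_mul_add_of_lt ha hlt b).le
  · exact add_le_add_right (hab rfl) _

end Ordinal

open Ordinal in
/-- The "min" step (Case 2) of the Moschovakis scale construction: given a scale `φ`
on `Q ⊆ Baire × κ` bounded by `μ`, let `P` be the projection of `Q` and, for `x ∈ P`,
let `A x` be the least `α < κ` with `(x, α) ∈ Q`.  Then the norms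
`ψ 0 x = 0` and `ψ (i+1) x = μ · A x + φ i (x, A x)` (the ordinal of the pair
`⟨A x, φ i (x, A x)⟩` in the lexicographic order) form a scale on `P`. -/
theorem moschovakis_min_step
    (κ μ : Ordinal) (Q : Set (Baire × Ordinal))
    (hQκ : ∀ p ∈ Q, p.2 < κ)
    (φ : ℕ → Baire × Ordinal → Ordinal)
    (hφ : IsScaleOrd Q φ)
    (hbound : ∀ i p, p ∈ Q → φ i p < μ)
    (P : Set Baire) (hP : ∀ x, x ∈ P ↔ ∃ α < κ, (x, α) ∈ Q)
    (A : Baire → Ordinal)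
    (hA : ∀ x ∈ P, A x < κ ∧ (x, A x) ∈ Q ∧ ∀ β < κ, (x, β) ∈ Q → A x ≤ β)
    (ψ : ℕ → Baire → Ordinal)
    (hψ0 : ∀ x ∈ P, ψ 0 x = 0)
    (hψs : ∀ i, ∀ x ∈ P, ψ (i + 1) x = μ * A x + φ i (x, A x)) :
    IsScale P ψ := by
  intro x y l hxP hconv hlim
  have hxQ i : (x i, A (x i)) ∈ Q := (hA _ (hxP i)).2.1
  have hψl n : ∀ᶠ i in atTop, ψ (n + 1) (x i) = l (n + 1) := eventually_atTop.2 (hlim (n + 1))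
  have hAl n : ∀ᶠ i in atTop, A (x i) = l (n + 1) / μ := (hψl n).mono fun i hi => by
    rw [← hi, hψs n _ (hxP i), mul_add_div_of_lt _ (hbound n _ (hxQ i))]
  have hφl n : ∀ᶠ i in atTop, φ n (x i, A (x i)) = l (n + 1) % μ := (hψl n).mono fun i hi => by
    rw [← hi, hψs n _ (hxP i), mul_add_mod_of_lt _ (hbound n _ (hxQ i))]
  have hdiv n : l (n + 1) / μ = l 1 / μ := by
    obtain ⟨i, hn, h0⟩ := ((hAl n).and (hAl 0)).exists
    exact hn.symm.trans h0
  obtain ⟨hyQ, hyφ⟩ := hφ x (fun i => A (x i)) y (l 1 / μ) (fun n => l (n + 1) % μ) hxQ hconv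
    (eventually_atTop.1 (hAl 0)) (fun n => eventually_atTop.1 (hφl n))
  have hyP : y ∈ P := (hP y).2 ⟨_, hQκ _ hyQ, hyQ⟩
  obtain ⟨-, hyAQ, hAy_min⟩ := hA y hyP
  refine ⟨hyP, ?_⟩
  rintro (_ | n)
  · rw [hψ0 y hyP]
    exact zero_le
  · rw [hψs n y hyP, ← div_add_mod (l (n + 1)) μ, hdiv n]
    refine mul_add_le_mul_add_of_lex (hAy_min _ (hQκ _ hyQ) hyQ) (hbound n _ hyAQ) fun hAy => ?_
    simpa only [hAy] using hyφ n
end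

section
/- Let X be a set, R ⊆ X × Baire space, k ∈ ℕ, and let φ_0, …, φ_k be norms on R. Let D = {p ∈ X : (p,y) ∈ R for every y in Baire space}, fix a finite sequence t of natural numbers, let G(p,p′) for p, p′ ∈ D be the comparison games described in the context, and define p ≤* p′ iff player II has a winning strategy in G(p,p′). Assume that every game G(p,p′) with p, p′ ∈ D is determined, i.e., one of the two players has a winning strategy. Then ≤* is a prewellordering of D: it is reflexive and transitive on D; for all p, p′ ∈ D, p ≤* p′ or p′ ≤* p; and the strict relation <* (where p <* p′ iff p ≤* p′ and not p′ ≤* p) is well-founded on D. -/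
/-- Concatenate a finite sequence `t` with an infinite sequence `z`, giving `t⌢z`. -/
def extSeq (t : List ℕ) (z : Baire) : Baire :=
  fun n => if h : n < t.length then t.get ⟨n, h⟩ else z (n - t.length)

/-- Lexicographic `≤` on tuples of ordinals. -/
def LexLE {n : ℕ} (f g : Fin n → Ordinal) : Prop :=
  f = g ∨ ∃ j, (∀ i, i < j → f i = g i) ∧ f j < g j

/-- Player II wins the run of the comparison game `G(p,p′)` in which player I has
produced `z` and player II has produced `z′`: with `y = t⌢z` and `y′ = t⌢z′`,
`⟨φ 0 (p,y), …, φ k (p,y)⟩ ≤ ⟨φ 0 (p′,y′), …, φ k (p′,y′)⟩` lexicographically. -/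
def IIWinsRun {X : Type*} {k : ℕ} (φ : Fin (k + 1) → X × Baire → Ordinal)
    (t : List ℕ) (p p' : X) (z z' : Baire) : Prop :=
  LexLE (fun j => φ j (p, extSeq t z)) (fun j => φ j (p', extSeq t z'))

/-- Player II's response to player I's moves `z` when following the strategy `σ`
(a function of the nonempty finite sequences `⟨z 0, …, z n⟩` of player I's moves,
since player I's move `z n` is made before player II's move `z′ n`). -/
def IIPlay (σ : List ℕ → ℕ) (z : Baire) : Baire :=
  fun n => σ ((List.range (n + 1)).map z)

/-- Player I's response to player II's moves `z′` when following the strategy `τ`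
(a function of the finite sequences `⟨z′ 0, …, z′ (n−1)⟩` of player II's previous
moves, including the empty sequence). -/
def IPlay (τ : List ℕ → ℕ) (z' : Baire) : Baire :=
  fun n => τ ((List.range n).map z')

/-- Player II has a winning strategy in the comparison game `G(p,p′)`: `p ≤* p′`. -/
def LeStar {X : Type*} {k : ℕ} (φ : Fin (k + 1) → X × Baire → Ordinal)
    (t : List ℕ) (p p' : X) : Prop :=
  ∃ σ : List ℕ → ℕ, ∀ z : Baire, IIWinsRun φ t p p' z (IIPlay σ z)

/-- Player I has a winning strategy in the comparison game `G(p,p′)`. -/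
def IWins {X : Type*} {k : ℕ} (φ : Fin (k + 1) → X × Baire → Ordinal)
    (t : List ℕ) (p p' : X) : Prop :=
  ∃ τ : List ℕ → ℕ, ∀ z' : Baire, ¬ IIWinsRun φ t p p' (IPlay τ z') z'

def lexNorm {X : Type*} {k : ℕ} (φ : Fin (k + 1) → X × Baire → Ordinal) (t : List ℕ)
    (p : X) (z : Baire) : Lex (Fin (k + 1) → Ordinal) :=
  toLex fun j => φ j (p, extSeq t z)

theorem lexLE_iff_toLex_le {n : ℕ} (f g : Fin n → Ordinal) :
    LexLE f g ↔ toLex f ≤ toLex g := by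
  rw [le_iff_lt_or_eq, LexLE, or_comm, toLex.injective.eq_iff]
  rfl

section Game

variable {X : Type*} {k : ℕ} (φ : Fin (k + 1) → X × Baire → Ordinal) (t : List ℕ)

theorem iiWinsRun_iff {p p' : X} {z z' : Baire} :
    IIWinsRun φ t p p' z z' ↔ lexNorm φ t p z ≤ lexNorm φ t p' z' :=
  lexLE_iff_toLex_le _ _

theorem iiPlay_getLastD (z : Baire) : IIPlay (fun s => s.getLastD 0) z = z := by
  funext m
  simp [IIPlay, List.range_succ]

theorem iiPlay_dropLast (τ : List ℕ → ℕ) (z : Baire) :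
    IIPlay (fun s => τ s.dropLast) z = IPlay τ z := by
  funext m
  simp [IIPlay, IPlay, List.range_succ]

/-- Player II plays `σ₂` against the answers `σ₁` gives to player I's moves. -/
def composeStrategy (σ₁ σ₂ : List ℕ → ℕ) (s : List ℕ) : ℕ :=
  σ₂ ((List.range s.length).map fun i => σ₁ (s.take (i + 1)))

theorem iiPlay_composeStrategy (σ₁ σ₂ : List ℕ → ℕ) (z : Baire) :
    IIPlay (composeStrategy σ₁ σ₂) z = IIPlay σ₂ (IIPlay σ₁ z) := by
  funext m
  simp only [IIPlay, composeStrategy, List.length_map, List.length_range]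
  congr 1
  refine List.map_congr_left fun i hi => ?_
  rw [← List.map_take, List.take_range, Nat.min_eq_left (List.mem_range.mp hi)]
  rfl

theorem leStar_refl (p : X) : LeStar φ t p p :=
  ⟨fun s => s.getLastD 0, fun z => by rw [iiPlay_getLastD]; exact Or.inl rfl⟩

theorem LeStar.trans {p q r : X} (hpq : LeStar φ t p q) (hqr : LeStar φ t q r) :
    LeStar φ t p r := by
  obtain ⟨σ₁, h₁⟩ := hpq
  obtain ⟨σ₂, h₂⟩ := hqr
  refine ⟨composeStrategy σ₁ σ₂, fun z => ?_⟩
  rw [iiPlay_composeStrategy, iiWinsRun_iff]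
  exact ((iiWinsRun_iff φ t).mp (h₁ z)).trans ((iiWinsRun_iff φ t).mp (h₂ _))

theorem IWins.leStar_swap {p p' : X} (h : IWins φ t p p') : LeStar φ t p' p := by
  obtain ⟨τ, hτ⟩ := h
  refine ⟨fun s => τ s.dropLast, fun z => ?_⟩
  rw [iiPlay_dropLast, iiWinsRun_iff]
  exact (not_le.mp (mt (iiWinsRun_iff φ t).mpr (hτ z))).le

/-- Player I's plays in a sequence of games, I's play in game `n` following `τ n` against
I's play in game `n + 1`; well defined because `IPlay` reads only strictly earlier moves. -/
def chainedIPlay (τ : ℕ → List ℕ → ℕ) : ℕ → Baire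
  | n, m => τ n ((List.range m).attach.map fun i => chainedIPlay τ (n + 1) i.1)
termination_by _ m => m
decreasing_by exact List.mem_range.mp i.2

theorem chainedIPlay_eq (τ : ℕ → List ℕ → ℕ) (n : ℕ) :
    chainedIPlay τ n = IPlay (τ n) (chainedIPlay τ (n + 1)) := by
  funext m
  rw [chainedIPlay, IPlay, List.attach_map_val]

theorem wellFounded_iWins_flip : WellFounded fun q p : X => IWins φ t p q := by
  refine wellFounded_iff_isEmpty_descending_chain.mpr ⟨fun ⟨p, hp⟩ => ?_⟩
  choose τ hτ using hp
  let z := chainedIPlay τ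
  have hdesc n : lexNorm φ t (p (n + 1)) (z (n + 1)) < lexNorm φ t (p n) (z n) := by
    have hlost := hτ n (z (n + 1))
    rw [← chainedIPlay_eq, iiWinsRun_iff, not_le] at hlost
    exact hlost
  obtain ⟨n, hn⟩ :=
    WellFounded.not_rel_apply_succ (r := (· < ·)) fun n => lexNorm φ t (p n) (z n)
  exact hn (hdesc n)

end Game

theorem leStar_prewellordering_general {X : Type*} (k : ℕ)
    (φ : Fin (k + 1) → X × Baire → Ordinal) (t : List ℕ)
    (D : Set X)
    (hdet : ∀ p ∈ D, ∀ p' ∈ D, LeStar φ t p p' ∨ IWins φ t p p') :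
    (∀ p ∈ D, LeStar φ t p p) ∧
    (∀ p ∈ D, ∀ q ∈ D, ∀ r ∈ D,
      LeStar φ t p q → LeStar φ t q r → LeStar φ t p r) ∧
    (∀ p ∈ D, ∀ q ∈ D, LeStar φ t p q ∨ LeStar φ t q p) ∧
    (∀ S : Set X, S ⊆ D → S.Nonempty →
      ∃ p ∈ S, ∀ q ∈ S, ¬ (LeStar φ t q p ∧ ¬ LeStar φ t p q)) := by
  refine ⟨fun p _ => leStar_refl φ t p, fun p _ q _ r _ => LeStar.trans φ t,
    fun p hp q hq => (hdet p hp q hq).imp_right (IWins.leStar_swap φ t), ?_⟩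
  intro S hSD hS
  obtain ⟨p, hpS, hmin⟩ := (wellFounded_iWins_flip φ t).has_min S hS
  exact ⟨p, hpS, fun q hqS ⟨_, hpq⟩ =>
    hmin q hqS ((hdet p (hSD hpS) q (hSD hqS)).resolve_left hpq)⟩

/-- Assuming each comparison game `G(p,p′)` with `p, p′ ∈ D` is determined, the
relation `≤*` is a prewellordering of `D = {p : (p,y) ∈ R for every y}`: it is
reflexive, transitive, and total on `D`, and the strict part
`p <* p′ ↔ p ≤* p′ ∧ ¬ p′ ≤* p` is well-founded on `D` (every nonempty subset of `D`
has a `<*`-minimal element). -/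
theorem leStar_prewellordering {X : Type*} (R : Set (X × Baire)) (k : ℕ)
    (φ : Fin (k + 1) → X × Baire → Ordinal) (t : List ℕ)
    (D : Set X) (hD : ∀ p, p ∈ D ↔ ∀ y : Baire, (p, y) ∈ R)
    (hdet : ∀ p ∈ D, ∀ p' ∈ D, LeStar φ t p p' ∨ IWins φ t p p') :
    (∀ p ∈ D, LeStar φ t p p) ∧
    (∀ p ∈ D, ∀ q ∈ D, ∀ r ∈ D,
      LeStar φ t p q → LeStar φ t q r → LeStar φ t p r) ∧
    (∀ p ∈ D, ∀ q ∈ D, LeStar φ t p q ∨ LeStar φ t q p) ∧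
    (∀ S : Set X, S ⊆ D → S.Nonempty →
      ∃ p ∈ S, ∀ q ∈ S, ¬ (LeStar φ t q p ∧ ¬ LeStar φ t p q)) :=
  leStar_prewellordering_general k φ t D hdet
end
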